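/- Let d and k be natural numbers and let θ ∈ (0,1]. There exists a constant C > 0 (depending only on d, k and θ) such that for every nondegenerate simplex T ⊆ ℝ^d, every polynomial function p : ℝ^d → ℝ of total degree at most k, and every Lebesgue-measurable set S ⊆ T with μ(S) ≥ θ·μ(T), one has ∫_T p(x)² dμ(x) ≤ C · ∫_S p(x)² dμ(x). (The constant is uniform over all nondegenerate simplices, since both sides and the constraint μ(S) ≥ θ·μ(T) transform compatibly under invertible affine maps.) -/

import Mathlib

/-!
On a fixed compact set `Δ`, polynomials of degree at most `k` form a finite-dimensional space, and
a nonzero polynomial vanishes only on a null set. Hence for each `p` of unit norm (in coordinates)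
the integrals `∫_S p²` over measurable `S ⊆ Δ` with `μ S ≥ c` are bounded below by a positive
constant: the set where `p²` is small has measure less than `c`. These integrals are Lipschitz in
`p` uniformly in `S`, so by compactness of the unit sphere the lower bound is uniform in `p`,
and homogeneity gives `∫_Δ p² ≤ C ∫_S p²`. An affine map carries a reference simplex onto any
simplex `T`, multiplies all volumes and integrals by the same factor `|det|`, and preserves the
degree of polynomials, so the constant of the reference simplex works for every `T`.
-/

open MeasureTheory Set Filter Topology Function
open scoped ENNReal NNReal

theorem ae_of_ae_ae_finCons {d : ℕ} {Q : (Fin (d + 1) → ℝ) → Prop}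
    (hQ : MeasurableSet {x | Q x}) (h : ∀ᵐ y : Fin d → ℝ, ∀ᵐ t : ℝ, Q (Fin.cons t y)) :
    ∀ᵐ x : Fin (d + 1) → ℝ, Q x := by
  set e := MeasurableEquiv.piFinSuccAbove (fun _ : Fin (d + 1) => ℝ) 0
  have he : ∀ z, e.symm z = Fin.cons z.1 z.2 := fun z => by
    simp [e, MeasurableEquiv.piFinSuccAbove_symm_apply, Fin.consEquiv]
  have hQe : MeasurableSet {z : ℝ × (Fin d → ℝ) | Q (Fin.cons z.1 z.2)} := by
    simpa only [preimage_ofPred_eq, he] using e.symm.measurable hQ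
  have hprod : ∀ᵐ z ∂(volume : Measure ℝ).prod volume, Q (Fin.cons z.1 z.2) :=
    (Measure.ae_prod_iff_ae_ae hQe).2 ((Measure.ae_ae_comm hQe).2 h)
  filter_upwards [(volume_preserving_piFinSuccAbove (fun _ : Fin (d + 1) => ℝ) 0
    ).quasiMeasurePreserving.ae hprod] with x hx
  simpa using hx

namespace MvPolynomial

variable {σ τ R : Type*}

theorem ae_eval_ne_zero {d : ℕ} {p : MvPolynomial (Fin d) ℝ} (hp : p ≠ 0) :
    ∀ᵐ x : Fin d → ℝ, eval x p ≠ 0 := by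
  induction d with
  | zero =>
    obtain ⟨r, rfl⟩ := (isEmptyAlgEquiv ℝ (Fin 0)).symm.surjective p
    exact .of_forall fun x => by simpa using hp
  | succ d ih =>
    set P := finSuccEquiv ℝ d p
    have hP : P ≠ 0 := (map_ne_zero_iff _ (finSuccEquiv ℝ d).injective).2 hp
    refine ae_of_ae_ae_finCons ((continuous_eval p).measurable (measurableSet_singleton 0).compl) ?_
    filter_upwards [ih (Polynomial.leadingCoeff_ne_zero.2 hP)] with y hy
    have hPy : P.map (eval y) ≠ 0 := fun h0 => hy <| by
      simpa [Polynomial.coeff_map] using congrArg (Polynomial.coeff · P.natDegree) h0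
    filter_upwards [(Polynomial.finite_setOfPred_isRoot hPy).countable.ae_notMem volume] with t ht
    rwa [eval_eq_eval_mv_eval']

theorem totalDegree_bind₁_le [CommSemiring R] {f : σ → MvPolynomial τ R}
    (hf : ∀ i, (f i).totalDegree ≤ 1) (p : MvPolynomial σ R) :
    (bind₁ f p).totalDegree ≤ p.totalDegree := by
  conv_lhs => rw [p.as_sum, map_sum]
  refine (totalDegree_finsetSum _ _).trans (Finset.sup_le fun m hm => ?_)
  rw [bind₁_monomial]
  refine (totalDegree_mul _ _).trans ?_
  rw [totalDegree_C, zero_add]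
  refine (totalDegree_finsetProd _ _).trans ((Finset.sum_le_sum fun i _ =>
    (totalDegree_pow _ _).trans (Nat.mul_le_mul_left _ (hf i))).trans ?_)
  simpa [Finsupp.sum] using le_totalDegree hm

theorem exists_totalDegree_le_eval_comp [CommRing R] [Fintype σ] [DecidableEq σ]
    (A : (σ → R) →ᵃ[R] (τ → R)) (p : MvPolynomial τ R) :
    ∃ q : MvPolynomial σ R, q.totalDegree ≤ p.totalDegree ∧ ∀ x, eval x q = eval (A x) p := by
  set f : τ → MvPolynomial σ R := fun i =>
    C (A 0 i) + ∑ j, C (A.linear (Pi.single j 1) i) * X j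
  have hf : ∀ i, (f i).totalDegree ≤ 1 := fun i => by
    refine (totalDegree_add _ _).trans (max_le (by simp) ?_)
    refine (totalDegree_finsetSum _ _).trans (Finset.sup_le fun j _ => ?_)
    exact (totalDegree_mul _ _).trans
      (by simpa [X] using totalDegree_monomial_le (Finsupp.single j 1) (1 : R))
  refine ⟨bind₁ f p, totalDegree_bind₁_le hf p, fun x => ?_⟩
  have hAx : (fun i => eval x (f i)) = A x := by
    funext i
    have hlin : A.linear x = ∑ j, x j • A.linear (Pi.single j 1) := by
      conv_lhs => rw [← Finset.univ_sum_single x]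
      simp only [map_sum]
      congr 1 with j
      rw [← map_smul, ← Pi.single_smul', smul_eq_mul, mul_one]
    have : A x = A.linear x + A 0 := by simpa using A.map_vadd 0 x
    simp [f, this, hlin, mul_comm]
    ring
  change eval₂Hom (RingHom.id R) x (bind₁ f p) = _
  rw [eval₂Hom_bind₁]
  exact congrArg (fun y => eval y p) hAx

noncomputable def toContinuousMapₗ : MvPolynomial σ ℝ →ₗ[ℝ] C(σ → ℝ, ℝ) where
  toFun p := ⟨fun x => eval x p, continuous_eval p⟩
  map_add' p q := by ext; simp
  map_smul' r p := by ext; simp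

@[simp]
theorem toContinuousMapₗ_apply (p : MvPolynomial σ ℝ) (x : σ → ℝ) :
    toContinuousMapₗ p x = eval x p := rfl

end MvPolynomial

theorem exists_pos_le_setIntegral_of_le_measure {X : Type*} [MeasurableSpace X] {ν : Measure X}
    [IsFiniteMeasure ν] {f : X → ℝ} (hf : Integrable f ν) (hf_pos : ∀ᵐ x ∂ν, 0 < f x)
    {c : ℝ≥0∞} (hc : c ≠ 0) :
    ∃ ε > 0, ∀ S, c ≤ ν S → ε ≤ ∫ x in S, f x ∂ν := by
  rcases eq_or_ne c ∞ with rfl | hc_top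
  · exact ⟨1, one_pos, fun S hS => absurd (top_le_iff.1 hS) (measure_ne_top ν S)⟩
  have hlim : Tendsto (fun r => ν {x | f x < r}) (𝓝[>] 0) (𝓝 0) := by
    have hnull : ν (⋂ r > (0 : ℝ), {x | f x < r}) = 0 := by
      refine measure_mono_null (fun x hx => ?_) (ae_iff.1 hf_pos)
      simp only [mem_iInter, mem_ofPred_eq] at hx ⊢
      exact fun hx0 => lt_irrefl _ (hx _ hx0)
    have := tendsto_measure_biInter_gt (s := fun r => {x | f x < r})
      (fun r _ => nullMeasurableSet_lt hf.aemeasurable aemeasurable_const)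
      (fun i j _ hij x hx => lt_of_lt_of_le hx hij) ⟨1, one_pos, measure_ne_top _ _⟩
    rwa [hnull] at this
  obtain ⟨r, hr_small, hr_pos⟩ :=
    ((hlim.eventually (gt_mem_nhds (pos_iff_ne_zero.2 hc))).and self_mem_nhdsWithin).exists
  refine ⟨r * (c - ν {x | f x < r}).toReal,
    mul_pos hr_pos (ENNReal.toReal_pos (tsub_pos_of_lt hr_small).ne' (ENNReal.sub_ne_top hc_top)),
    fun S hS => ?_⟩
  have hmass : c - ν {x | f x < r} ≤ ν.restrict S {x | r ≤ f x} := by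
    refine tsub_le_iff_right.2 (hS.trans ((measure_le_inter_add_sdiff ν S {x | r ≤ f x}).trans ?_))
    refine add_le_add ?_ (measure_mono fun x hx => show f x < r from not_le.1 hx.2)
    rw [inter_comm]
    exact Measure.le_restrict_apply _ _
  calc r * (c - ν {x | f x < r}).toReal ≤ r * (ν.restrict S).real {x | r ≤ f x} := by
        gcongr
        exact ENNReal.toReal_mono (measure_ne_top _ _) hmass
    _ ≤ ∫ x in S, f x ∂ν := mul_meas_ge_le_integral_of_nonneg
        (ae_restrict_of_ae (hf_pos.mono fun x hx => hx.le)) hf.integrableOn r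

theorem IsCompact.exists_pos_le_of_lipschitzOnWith {α ι : Type*} [PseudoMetricSpace α]
    {s : Set α} (hs : IsCompact s) {g : ι → α → ℝ} {L : ℝ≥0}
    (hg : ∀ i, LipschitzOnWith L (g i) s) (hpos : ∀ a ∈ s, ∃ ε > 0, ∀ i, ε ≤ g i a) :
    ∃ ε > 0, ∀ i, ∀ a ∈ s, ε ≤ g i a := by
  rcases isEmpty_or_nonempty ι with hι | hι
  · exact ⟨1, one_pos, fun i => isEmptyElim i⟩
  rcases s.eq_empty_or_nonempty with rfl | hne
  · exact ⟨1, one_pos, fun _ _ h => absurd h (notMem_empty _)⟩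
  have hbdd : ∀ a ∈ s, BddBelow (range fun i => g i a) := fun a ha => by
    obtain ⟨ε, -, h⟩ := hpos a ha
    exact ⟨ε, forall_mem_range.2 h⟩
  have hm : LipschitzOnWith L (fun a => ⨅ i, g i a) s :=
    LipschitzOnWith.of_le_add_mul L fun a ha b hb => by
      rw [← sub_le_iff_le_add]
      exact le_ciInf fun i => sub_le_iff_le_add.2 <|
        (ciInf_le (hbdd a ha) i).trans ((hg i).le_add_mul ha hb)
  obtain ⟨a₀, ha₀, hmin⟩ := hs.exists_isMinOn hne hm.continuousOn
  obtain ⟨ε, hε, hεa₀⟩ := hpos a₀ ha₀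
  exact ⟨_, hε.trans_le (le_ciInf hεa₀), fun i a ha => (hmin ha).trans (ciInf_le (hbdd a ha) i)⟩

section LinearFamily

variable {X E : Type*} [TopologicalSpace X] [NormedAddCommGroup E] [NormedSpace ℝ E]

theorem LinearMap.exists_abs_apply_le_mul_norm [FiniteDimensional ℝ E]
    (Φ : E →ₗ[ℝ] C(X, ℝ)) {Δ : Set X} (hΔ : IsCompact Δ) :
    ∃ K > 0, ∀ a, ∀ x ∈ Δ, |Φ a x| ≤ K * ‖a‖ := by
  have : CompactSpace Δ := isCompact_iff_compactSpace.1 hΔ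
  let R : E →L[ℝ] C(Δ, ℝ) := LinearMap.toContinuousLinearMap
    ((ContinuousMap.compRightAlgHom ℝ ℝ ⟨((↑) : Δ → X), continuous_subtype_val⟩).toLinearMap ∘ₗ Φ)
  refine ⟨‖R‖ + 1, by positivity, fun a x hx => ?_⟩
  calc |Φ a x| = ‖R a ⟨x, hx⟩‖ := rfl
    _ ≤ ‖R a‖ := (R a).norm_coe_le_norm _
    _ ≤ ‖R‖ * ‖a‖ := R.le_opNorm a
    _ ≤ (‖R‖ + 1) * ‖a‖ := by gcongr; linarith

variable [T2Space X] [MeasurableSpace X] [OpensMeasurableSpace X] {μ : Measure X}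
  [IsFiniteMeasureOnCompacts μ]

theorem lipschitzOnWith_setIntegral_sq {Φ : E →ₗ[ℝ] C(X, ℝ)} {Δ S : Set X} (hΔ : IsCompact Δ)
    (hS : S ⊆ Δ) {K : ℝ} (hK : 0 ≤ K) (hΦK : ∀ a, ∀ x ∈ Δ, |Φ a x| ≤ K * ‖a‖) :
    LipschitzOnWith (2 * K ^ 2 * μ.real Δ).toNNReal (fun a => ∫ x in S, Φ a x ^ 2 ∂μ)
      (Metric.closedBall 0 1) := by
  have hint : ∀ a, IntegrableOn (fun x => Φ a x ^ 2) S μ := fun a =>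
    (((Φ a).continuous.pow 2).continuousOn.integrableOn_compact hΔ).mono_set hS
  refine LipschitzOnWith.of_dist_le_mul fun a ha b hb => ?_
  rw [mem_closedBall_zero_iff] at ha hb
  rw [dist_eq_norm, dist_eq_norm, ← integral_sub (hint a) (hint b),
    Real.coe_toNNReal _ (by positivity)]
  refine (norm_setIntegral_le_of_norm_le_const (C := 2 * K ^ 2 * ‖a - b‖)
    ((measure_mono hS).trans_lt (hΔ.measure_lt_top (μ := μ))) fun x hx => ?_).trans ?_
  · have hab : Φ a x ^ 2 - Φ b x ^ 2 = Φ (a - b) x * (Φ a x + Φ b x) := by simp; ring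
    rw [hab, norm_mul, Real.norm_eq_abs, Real.norm_eq_abs]
    calc |Φ (a - b) x| * |Φ a x + Φ b x| ≤ (K * ‖a - b‖) * (K * ‖a‖ + K * ‖b‖) :=
          mul_le_mul (hΦK _ x (hS hx)) ((abs_add_le _ _).trans
            (add_le_add (hΦK a x (hS hx)) (hΦK b x (hS hx)))) (abs_nonneg _) (by positivity)
      _ ≤ (K * ‖a - b‖) * (K * 1 + K * 1) := by gcongr
      _ = 2 * K ^ 2 * ‖a - b‖ := by ring
  · calc 2 * K ^ 2 * ‖a - b‖ * μ.real S ≤ 2 * K ^ 2 * ‖a - b‖ * μ.real Δ := by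
          gcongr
          exact (hΔ.measure_lt_top (μ := μ)).ne
      _ = _ := by ring

theorem LinearMap.exists_pos_mul_norm_sq_le_setIntegral_sq [FiniteDimensional ℝ E]
    (Φ : E →ₗ[ℝ] C(X, ℝ)) {Δ : Set X} (hΔ : IsCompact Δ)
    (hΦ : ∀ a ≠ 0, ∀ᵐ x ∂μ.restrict Δ, Φ a x ≠ 0) {c : ℝ≥0∞} (hc : c ≠ 0) :
    ∃ ε > 0, ∀ a S, MeasurableSet S → S ⊆ Δ → c ≤ μ S →
      ε * ‖a‖ ^ 2 ≤ ∫ x in S, Φ a x ^ 2 ∂μ := by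
  have : IsFiniteMeasure (μ.restrict Δ) := isFiniteMeasure_restrict.2 hΔ.measure_lt_top.ne
  have hpos : ∀ a ∈ Metric.sphere (0 : E) 1, ∃ ε > 0,
      ∀ S : {S // MeasurableSet S ∧ S ⊆ Δ ∧ c ≤ μ S}, ε ≤ ∫ x in S, Φ a x ^ 2 ∂μ := by
    intro a ha
    obtain ⟨ε, hε, h⟩ := exists_pos_le_setIntegral_of_le_measure
      (f := fun x => Φ a x ^ 2) (((Φ a).continuous.pow 2).continuousOn.integrableOn_compact hΔ)
      ((hΦ a (Metric.ne_of_mem_sphere ha one_ne_zero)).mono fun x hx => by positivity) hc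
    refine ⟨ε, hε, fun ⟨S, hS, hSΔ, hcS⟩ => ?_⟩
    have hres : μ.restrict Δ S = μ S := by rw [Measure.restrict_apply hS, inter_eq_left.2 hSΔ]
    simpa [Measure.restrict_restrict hS, inter_eq_left.2 hSΔ] using h S (hres ▸ hcS)
  obtain ⟨K, hK, hΦK⟩ := Φ.exists_abs_apply_le_mul_norm hΔ
  obtain ⟨ε, hε, hεS⟩ := (isCompact_sphere (0 : E) 1).exists_pos_le_of_lipschitzOnWith
    (fun S => (lipschitzOnWith_setIntegral_sq hΔ S.2.2.1 hK.le hΦK).mono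
      Metric.sphere_subset_closedBall) hpos
  refine ⟨ε, hε, fun a S hS hSΔ hcS => ?_⟩
  rcases eq_or_ne a 0 with rfl | ha
  · simp
  have hsq : ∫ x in S, Φ a x ^ 2 ∂μ = ‖a‖ ^ 2 * ∫ x in S, Φ (‖a‖⁻¹ • a) x ^ 2 ∂μ := by
    simp [mul_pow, ← integral_const_mul, ha]
  rw [hsq, mul_comm]
  exact mul_le_mul_of_nonneg_left (hεS ⟨S, hS, hSΔ, hcS⟩ _ (by simp [norm_smul, ha]))
    (sq_nonneg _)

theorem LinearMap.exists_integral_sq_le_mul_setIntegral_sq [FiniteDimensional ℝ E]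
    (Φ : E →ₗ[ℝ] C(X, ℝ)) {Δ : Set X} (hΔ : IsCompact Δ)
    (hΦ : ∀ a ≠ 0, ∀ᵐ x ∂μ.restrict Δ, Φ a x ≠ 0) {c : ℝ≥0∞} (hc : c ≠ 0) :
    ∃ C > 0, ∀ a S, MeasurableSet S → S ⊆ Δ → c ≤ μ S →
      ∫ x in Δ, Φ a x ^ 2 ∂μ ≤ C * ∫ x in S, Φ a x ^ 2 ∂μ := by
  obtain ⟨K, hK, hΦK⟩ := Φ.exists_abs_apply_le_mul_norm hΔ
  obtain ⟨ε, hε, hεS⟩ := Φ.exists_pos_mul_norm_sq_le_setIntegral_sq hΔ hΦ hc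
  refine ⟨max (K ^ 2 * μ.real Δ / ε) 1, by positivity, fun a S hS hSΔ hcS => ?_⟩
  have hΔbound : ∫ x in Δ, Φ a x ^ 2 ∂μ ≤ K ^ 2 * μ.real Δ / ε * (ε * ‖a‖ ^ 2) := by
    calc ∫ x in Δ, Φ a x ^ 2 ∂μ ≤ ‖∫ x in Δ, Φ a x ^ 2 ∂μ‖ := Real.le_norm_self _
      _ ≤ (K * ‖a‖) ^ 2 * μ.real Δ :=
        norm_setIntegral_le_of_norm_le_const hΔ.measure_lt_top fun x hx => by
          rw [Real.norm_eq_abs, abs_pow]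
          exact pow_le_pow_left₀ (abs_nonneg _) (hΦK a x hx) 2
      _ = K ^ 2 * μ.real Δ / ε * (ε * ‖a‖ ^ 2) := by field_simp
  exact hΔbound.trans (mul_le_mul (le_max_left _ _) (hεS a S hS hSΔ hcS) (by positivity)
    (by positivity))

end LinearFamily

theorem MvPolynomial.exists_integral_sq_le_mul_setIntegral_sq {d : ℕ} (k : ℕ)
    {Δ : Set (Fin d → ℝ)} (hΔ : IsCompact Δ) {c : ℝ≥0∞} (hc : c ≠ 0) :
    ∃ C > 0, ∀ p : MvPolynomial (Fin d) ℝ, p.totalDegree ≤ k → ∀ S, MeasurableSet S → S ⊆ Δ →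
      c ≤ volume S → ∫ x in Δ, eval x p ^ 2 ≤ C * ∫ x in S, eval x p ^ 2 := by
  let V := restrictTotalDegree (Fin d) ℝ k
  let e := (Module.finBasis ℝ V).equivFun
  obtain ⟨C, hC, h⟩ := (toContinuousMapₗ ∘ₗ V.subtype ∘ₗ e.symm.toLinearMap
    ).exists_integral_sq_le_mul_setIntegral_sq (μ := volume) hΔ
      (fun a ha => ae_restrict_of_ae (ae_eval_ne_zero (by simpa using ha))) hc
  refine ⟨C, hC, fun p hp => ?_⟩
  simpa using h (e ⟨p, (mem_restrictTotalDegree _ _ _).2 hp⟩)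

section AffineChange

variable {E : Type*} [NormedAddCommGroup E] [NormedSpace ℝ E]

theorem ContinuousAffineMap.apply_eq_contLinear_add (A : E →ᴬ[ℝ] E) (x : E) :
    A x = A.contLinear x + A 0 := by
  simpa using A.map_vadd 0 x

theorem ContinuousAffineMap.injective_of_det_ne_zero [FiniteDimensional ℝ E] (A : E →ᴬ[ℝ] E)
    (h : A.contLinear.det ≠ 0) : Injective A := fun x y hxy => by
  have hL : Injective A.contLinear := ((Module.End.isUnit_iff _).1
    ((LinearMap.isUnit_iff_isUnit_det _).2 (isUnit_iff_ne_zero.2 h))).1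
  rw [A.apply_eq_contLinear_add x, A.apply_eq_contLinear_add y] at hxy
  exact hL (add_right_cancel hxy)

variable [FiniteDimensional ℝ E] [MeasurableSpace E] [BorelSpace E] (μ : Measure E)
  [μ.IsAddHaarMeasure]

theorem addHaar_image_continuousAffineMap (A : E →ᴬ[ℝ] E) (s : Set E) :
    μ (A '' s) = ENNReal.ofReal |A.contLinear.det| * μ s := by
  have : A '' s = (A 0 + ·) '' (A.contLinear '' s) := by
    rw [image_image]
    exact image_congr fun x _ => by rw [A.apply_eq_contLinear_add, add_comm]
  rw [this, image_add_left, measure_preimage_add, Measure.addHaar_image_continuousLinearMap]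

theorem setIntegral_image_continuousAffineMap {F : Type*} [NormedAddCommGroup F]
    [NormedSpace ℝ F] (A : E →ᴬ[ℝ] E) (hA : Injective A) {s : Set E} (hs : MeasurableSet s)
    (f : E → F) : ∫ x in A '' s, f x ∂μ = |A.contLinear.det| • ∫ x in s, f (A x) ∂μ := by
  rw [integral_image_eq_integral_abs_det_fderiv_smul μ hs
    (fun x _ => A.hasFDerivAt.hasFDerivWithinAt) hA.injOn, integral_smul]

theorem integral_sq_le_mul_setIntegral_sq_image {𝓕 : Set (E → ℝ)} (A : E →ᴬ[ℝ] E)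
    (hA𝓕 : ∀ f ∈ 𝓕, f ∘ A ∈ 𝓕) {Δ : Set E} (hΔ : MeasurableSet Δ) {C : ℝ} (hC : 0 ≤ C)
    {r : ℝ≥0∞} (h : ∀ f ∈ 𝓕, ∀ S, MeasurableSet S → S ⊆ Δ → r * μ Δ ≤ μ S →
      ∫ x in Δ, f x ^ 2 ∂μ ≤ C * ∫ x in S, f x ^ 2 ∂μ) :
    ∀ f ∈ 𝓕, ∀ S, MeasurableSet S → S ⊆ A '' Δ → r * μ (A '' Δ) ≤ μ S →
      ∫ x in A '' Δ, f x ^ 2 ∂μ ≤ C * ∫ x in S, f x ^ 2 ∂μ := by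
  intro f hf S hS hSA hrS
  by_cases hdet : A.contLinear.det = 0
  · have hnull : μ (A '' Δ) = 0 := by simp [addHaar_image_continuousAffineMap, hdet]
    rw [Measure.restrict_eq_zero.2 hnull, integral_zero_measure]
    exact mul_nonneg hC (integral_nonneg fun x => sq_nonneg _)
  have hA := A.injective_of_det_ne_zero hdet
  have hAS : A '' (A ⁻¹' S) = S :=
    image_preimage_eq_of_subset (hSA.trans (image_subset_range _ _))
  have hSΔ : A ⁻¹' S ⊆ Δ := fun x hx => by
    obtain ⟨y, hy, hyx⟩ := hSA hx
    rwa [← hA hyx]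
  have hD : ENNReal.ofReal |A.contLinear.det| ≠ 0 := by simpa using hdet
  have hrS' : r * μ Δ ≤ μ (A ⁻¹' S) := by
    rw [← hAS, addHaar_image_continuousAffineMap, addHaar_image_continuousAffineMap,
      mul_left_comm] at hrS
    exact (ENNReal.mul_le_mul_iff_right hD ENNReal.ofReal_ne_top).1 hrS
  rw [← hAS, setIntegral_image_continuousAffineMap μ A hA hΔ,
    setIntegral_image_continuousAffineMap μ A hA (hS.preimage A.continuous.measurable),
    smul_eq_mul, smul_eq_mul, mul_left_comm]
  gcongr
  exact h _ (hA𝓕 f hf) _ (hS.preimage A.continuous.measurable) hSΔ hrS'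

end AffineChange

def cornerVertex (d : ℕ) : Fin (d + 1) → Fin d → ℝ := Fin.cons 0 fun j => Pi.single j 1

def cornerSimplex (d : ℕ) : Set (Fin d → ℝ) := convexHull ℝ (range (cornerVertex d))

theorem isCompact_cornerSimplex (d : ℕ) : IsCompact (cornerSimplex d) :=
  (finite_range (cornerVertex d)).isCompact_convexHull (𝕜 := ℝ)

theorem volume_cornerSimplex_pos (d : ℕ) : 0 < volume (cornerSimplex d) := by
  have hspan : affineSpan ℝ (range (cornerVertex d)) = ⊤ := by
    have h0 : (0 : Fin d → ℝ) ∈ range (cornerVertex d) := ⟨0, rfl⟩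
    rw [AffineSubspace.affineSpan_eq_top_iff_vectorSpan_eq_top_of_nonempty ℝ _ _ ⟨0, h0⟩,
      vectorSpan_eq_span_vsub_set_right ℝ h0, eq_top_iff, ← (Pi.basisFun ℝ (Fin d)).span_eq]
    refine Submodule.span_mono ?_
    rintro _ ⟨j, rfl⟩
    exact ⟨_, ⟨j.succ, rfl⟩, by simp [cornerVertex]⟩
  obtain ⟨x, hx⟩ := interior_convexHull_nonempty_iff_affineSpan_eq_top.2 hspan
  exact (isOpen_interior.measure_pos volume ⟨x, hx⟩).trans_le (measure_mono interior_subset)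

theorem exists_continuousAffineMap_image_cornerSimplex {d : ℕ} (v : Fin (d + 1) → Fin d → ℝ) :
    ∃ A : (Fin d → ℝ) →ᴬ[ℝ] (Fin d → ℝ), A '' cornerSimplex d = convexHull ℝ (range v) := by
  let A : (Fin d → ℝ) →ᴬ[ℝ] (Fin d → ℝ) :=
    ContinuousLinearMap.toContinuousAffineMap
      (Fintype.linearCombination ℝ fun j => v j.succ - v 0).toContinuousLinearMap
      + ContinuousAffineMap.const ℝ _ (v 0)
  have hA : A ∘ cornerVertex d = v := by
    funext i
    refine Fin.cases ?_ (fun j => ?_) i <;>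
      simp [A, cornerVertex, Fintype.linearCombination_apply]
  refine ⟨A, ?_⟩
  rw [cornerSimplex, ← ContinuousAffineMap.coe_toAffineMap, AffineMap.image_convexHull,
    ← range_comp, ContinuousAffineMap.coe_toAffineMap, hA]

/-- the affine-invariant form of Proposition A0 of the paper.
For `θ ∈ (0,1]` there is `C > 0` depending only on `d, k, θ` such that for every
nondegenerate simplex `T ⊆ ℝ^d` (the convex hull of `d+1` affinely independent points),
every polynomial `p` of total degree at most `k`, and every measurable `S ⊆ T` with
`μ S ≥ θ·μ T`, one has `∫_T p² dμ ≤ C ∫_S p² dμ`. -/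
theorem statement_12 (d k : ℕ) (θ : ℝ) (hθ : θ ∈ Set.Ioc (0 : ℝ) 1) :
    ∃ C : ℝ, 0 < C ∧
      ∀ T : Set (Fin d → ℝ),
        (∃ v : Fin (d + 1) → (Fin d → ℝ), AffineIndependent ℝ v ∧
          T = convexHull ℝ (Set.range v)) →
        ∀ p : MvPolynomial (Fin d) ℝ, p.totalDegree ≤ k →
          ∀ S : Set (Fin d → ℝ), MeasurableSet S → S ⊆ T →
            ENNReal.ofReal θ * volume T ≤ volume S →
            ∫ x in T, (MvPolynomial.eval x p) ^ 2 ≤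
              C * ∫ x in S, (MvPolynomial.eval x p) ^ 2 := by
  obtain ⟨C, hC, hΔ⟩ := MvPolynomial.exists_integral_sq_le_mul_setIntegral_sq k
    (isCompact_cornerSimplex d) (c := ENNReal.ofReal θ * volume (cornerSimplex d))
    (mul_ne_zero (ENNReal.ofReal_pos.2 hθ.1).ne' (volume_cornerSimplex_pos d).ne')
  refine ⟨C, hC, ?_⟩
  rintro T ⟨v, -, rfl⟩ p hp S hS hST hθS
  obtain ⟨A, hA⟩ := exists_continuousAffineMap_image_cornerSimplex v
  rw [← hA] at hST hθS ⊢
  refine integral_sq_le_mul_setIntegral_sq_image volume A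
    (𝓕 := {f | ∃ q : MvPolynomial (Fin d) ℝ, q.totalDegree ≤ k ∧ f = (MvPolynomial.eval · q)})
    ?_ (isCompact_cornerSimplex d).isClosed.measurableSet hC.le ?_ _ ⟨p, hp, rfl⟩ S hS hST hθS
  · rintro _ ⟨q, hq, rfl⟩
    obtain ⟨q', hq', hq'A⟩ := MvPolynomial.exists_totalDegree_le_eval_comp
      (A : (Fin d → ℝ) →ᵃ[ℝ] Fin d → ℝ) q
    exact ⟨q', hq'.trans hq, funext fun x => (hq'A x).symm⟩
  · rintro _ ⟨q, hq, rfl⟩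
    exact hΔ q hq
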